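/- arXiv:math/0306292 — 4 statements merged into one kernel-verified Lean document; each statement's English description precedes it below -/
import Mathlib

section
/- There exists a compact topological group X and a continuous group automorphism T : X → X such that for every n ≥ 1 the set F_n(T) = {x ∈ X : T^n(x) = x} is finite, and (1/n)·log|F_n(T)| → ∞ as n → ∞. -/
/-! Take `X = ∏ᵢ ZMod pᵢ` (written multiplicatively) and let `T` multiply the `i`-th coordinate by
a unit `uᵢ` of order `i + 1`. Then `x` is fixed by `Tⁿ` exactly when its coordinates vanish outside
the finitely many `i` with `i + 1 ∣ n`, so `Fₙ(T)` is finite and contains a copy of `ZMod pₙ₋₁`.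
Since there are infinitely many primes `≡ 1 mod (i + 1)`, we may take `pᵢ > 2 ^ (i + 1) ^ 2`,
whence `|Fₙ(T)| > 2 ^ n ^ 2`. -/

open Filter

theorem IsCyclic.exists_orderOf_eq_of_dvd {G : Type*} [Group G] [IsCyclic G] [Finite G] {d : ℕ}
    (hd : d ∣ Nat.card G) : ∃ g : G, orderOf g = d := by
  obtain ⟨g, hg⟩ := IsCyclic.exists_ofOrder_eq_natCard (α := G)
  exact ⟨g ^ (orderOf g / d), orderOf_pow_orderOf_div (hg ▸ Nat.card_pos.ne') (hg ▸ hd)⟩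

theorem ZMod.exists_prime_gt_unit_orderOf_eq (N : ℕ) {k : ℕ} (hk : k ≠ 0) :
    ∃ p : ℕ, p.Prime ∧ N < p ∧ ∃ u : (ZMod p)ˣ, orderOf u = k := by
  obtain ⟨p, hp, hNp, hpk⟩ := Nat.exists_prime_gt_modEq_one N hk
  have := Fact.mk hp
  refine ⟨p, hp, hNp, IsCyclic.exists_orderOf_eq_of_dvd ?_⟩
  rw [Nat.card_eq_fintype_card, ZMod.card_units_eq_totient, Nat.totient_prime hp]
  exact (Nat.modEq_iff_dvd' hp.one_le).1 hpk.symm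

namespace Units

variable {R : Type*} [Ring R]

def mulLeftMulAut (u : Rˣ) : Multiplicative R ≃* Multiplicative R :=
  AddEquiv.toMultiplicative (DistribMulAction.toAddAut Rˣ R u)

theorem mulLeftMulAut_apply (u : Rˣ) (x : Multiplicative R) :
    mulLeftMulAut u x = .ofAdd (↑u * x.toAdd) :=
  rfl

theorem iterate_mulLeftMulAut (u : Rˣ) (n : ℕ) (x : Multiplicative R) :
    (⇑(mulLeftMulAut u))^[n] x = .ofAdd (↑(u ^ n) * x.toAdd) := by
  induction n generalizing x with
  | zero => simp
  | succ n ih =>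
    rw [Function.iterate_succ_apply', ih, mulLeftMulAut_apply, toAdd_ofAdd, pow_succ',
      Units.val_mul, mul_assoc]

variable [TopologicalSpace R] [IsTopologicalRing R]

theorem continuous_mulLeftMulAut (u : Rˣ) : Continuous (mulLeftMulAut u) :=
  continuous_ofAdd.comp ((continuous_const_mul (u : R)).comp continuous_toAdd)

theorem continuous_mulLeftMulAut_symm (u : Rˣ) : Continuous (mulLeftMulAut u).symm :=
  continuous_ofAdd.comp ((continuous_const_mul (↑u⁻¹ : R)).comp continuous_toAdd)

end Units

section SupportedPi

variable {ι : Type*} {M : ι → Type*} [∀ i, Zero (M i)] [∀ i, Finite (M i)] {P : ι → Prop}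

theorem Set.finite_setOf_forall_not_imp_eq_zero (hP : {i | P i}.Finite) :
    {f : ∀ i, M i | ∀ i, ¬ P i → f i = 0}.Finite := by
  have : Finite {i // P i} := hP
  refine Set.finite_coe_iff.1 (Finite.of_injective (fun f j => f.1 (j : {i // P i})) ?_)
  intro f g hfg
  ext i
  by_cases hi : P i
  · exact congrFun hfg ⟨i, hi⟩
  · rw [f.2 i hi, g.2 i hi]

theorem card_le_card_setOf_forall_not_imp_eq_zero [DecidableEq ι] (hP : {i | P i}.Finite) {j : ι}
    (hj : P j) : Nat.card (M j) ≤ Nat.card {f : ∀ i, M i | ∀ i, ¬ P i → f i = 0} := by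
  have := (Set.finite_setOf_forall_not_imp_eq_zero (M := M) hP).to_subtype
  refine Nat.card_le_card_of_injective (fun v => ⟨Pi.single j v, fun i hi => ?_⟩) ?_
  · exact Pi.single_eq_of_ne (by rintro rfl; exact hi hj) v
  · exact fun v w hvw => Pi.single_injective j (congrArg Subtype.val hvw)

end SupportedPi

theorem Pi.iterate_mulLeftMulAut_eq_self_iff {ι : Type*} {K : ι → Type*} [∀ i, Ring (K i)]
    [∀ i, IsDomain (K i)]
    (u : ∀ i, (K i)ˣ) (n : ℕ) (x : Multiplicative (∀ i, K i)) :
    (⇑(Units.mulLeftMulAut (MulEquiv.piUnits.symm u)))^[n] x = x ↔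
      ∀ i, u i ^ n ≠ 1 → x.toAdd i = 0 := by
  have hval : ∀ i, (↑(MulEquiv.piUnits.symm u ^ n) : ∀ i, K i) i = ↑(u i ^ n) := fun i => by
    rw [← map_pow]
    rfl
  rw [Units.iterate_mulLeftMulAut, ← Multiplicative.toAdd.injective.eq_iff, toAdd_ofAdd, funext_iff]
  simp only [Pi.mul_apply, hval, mul_left_eq_self₀, Units.val_eq_one, or_iff_not_imp_left]

theorem tendsto_log_div_atTop_of_pow_mul_self_le {a : ℕ → ℕ}
    (ha : ∀ᶠ n in atTop, 2 ^ (n * n) ≤ a n) :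
    Tendsto (fun n => Real.log (a n) / n) atTop atTop := by
  refine tendsto_atTop_mono' _ ?_
    (tendsto_natCast_atTop_atTop.atTop_mul_const (Real.log_pos one_lt_two))
  filter_upwards [ha, eventually_gt_atTop 0] with n hn hn0
  have hn0' : (0 : ℝ) < n := Nat.cast_pos.2 hn0
  rw [le_div_iff₀ hn0']
  calc (n : ℝ) * Real.log 2 * n = Real.log ((2 : ℝ) ^ (n * n)) := by
        rw [Real.log_pow]; push_cast; ring
    _ ≤ Real.log (a n) := Real.log_le_log (by positivity) (by exact_mod_cast hn)

/-- There is a compact topological group `X` and a continuous group automorphism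
`T : X → X` such that every `Fₙ(T) = {x | Tⁿ x = x}` is finite and
`(1/n) log |Fₙ(T)| → ∞`. -/
theorem many_periodic_points :
    ∃ (X : Type) (_ : TopologicalSpace X) (_ : Group X) (_ : IsTopologicalGroup X)
      (_ : CompactSpace X) (T : X ≃* X),
      Continuous T ∧ Continuous T.symm ∧
      (∀ n : ℕ, 1 ≤ n → Set.Finite {x : X | (⇑T)^[n] x = x}) ∧
      Filter.Tendsto
        (fun n : ℕ => Real.log (Nat.card {x : X | (⇑T)^[n] x = x}) / n)
        Filter.atTop Filter.atTop := by
  choose p hp hp_gt u hu using fun i : ℕ =>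
    ZMod.exists_prime_gt_unit_orderOf_eq (2 ^ ((i + 1) * (i + 1))) i.succ_ne_zero
  have := fun i => Fact.mk (hp i)
  set T := Units.mulLeftMulAut (MulEquiv.piUnits.symm u)
  have hfix : ∀ n, {x | (⇑T)^[n] x = x} =
      {x : Multiplicative (∀ i, ZMod (p i)) | ∀ i, ¬ (i + 1) ∣ n → x.toAdd i = 0} := by
    intro n
    ext x
    simp only [Set.mem_ofPred_eq, T, Pi.iterate_mulLeftMulAut_eq_self_iff, ne_eq,
      ← orderOf_dvd_iff_pow_eq_one, hu]
  have hdvd : ∀ n, 1 ≤ n → {i | (i + 1) ∣ n}.Finite := fun n hn =>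
    (Set.finite_Iio n).subset fun i hi => Nat.le_of_dvd hn hi
  refine ⟨Multiplicative (∀ i, ZMod (p i)), inferInstance, inferInstance, inferInstance,
    inferInstance, T, Units.continuous_mulLeftMulAut _, Units.continuous_mulLeftMulAut_symm _,
    fun n hn => hfix n ▸ Set.finite_setOf_forall_not_imp_eq_zero (hdvd n hn), ?_⟩
  refine tendsto_log_div_atTop_of_pow_mul_self_le ?_
  filter_upwards [eventually_ge_atTop 1] with n hn
  obtain ⟨m, rfl⟩ : ∃ m, n = m + 1 := ⟨n - 1, by omega⟩
  calc 2 ^ ((m + 1) * (m + 1)) ≤ Nat.card (ZMod (p m)) := (Nat.card_zmod _).symm ▸ (hp_gt m).le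
    _ ≤ _ := hfix (m + 1) ▸
      card_le_card_setOf_forall_not_imp_eq_zero (M := fun i => ZMod (p i)) (hdvd _ hn) dvd_rfl
end

section
/- Let X be a set and T : X → X a map such that for every n ≥ 1 the set {x ∈ X : T^n(x) = x} is finite; write F_n(T) for its cardinality and L_n(T) for the number of points of X whose least period under T is exactly n. Then for any real C with 0 < C < ∞: (1/n)·log F_n(T) → C as n → ∞ if and only if (1/n)·log L_n(T) → C as n → ∞. -/
/-!
Sorting the points of period `n` by their least period gives
`Fₙ = Lₙ + ∑_{d ∣ n, d < n} L_d`. Since proper divisors of `n` are at most `n / 2`, a sequence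
of exponential growth rate at most `C` has proper-divisor sums of growth rate at most `C / 2`.
Hence, when `C > 0`, the correction term is negligible against both `Fₙ` and `Lₙ`, and the two
sequences have the same exponential growth rate.
-/

open Real Filter Function Finset

def HasExpGrowthAtMost (a : ℕ → ℝ) (C : ℝ) : Prop :=
  ∀ c > C, ∀ᶠ n : ℕ in atTop, a n ≤ exp (c * n)

def HasExpGrowthAtLeast (a : ℕ → ℝ) (C : ℝ) : Prop :=
  ∀ c < C, ∀ᶠ n : ℕ in atTop, exp (c * n) ≤ a n

lemma exists_forall_le_mul_of_eventually_le {a b : ℕ → ℝ} (h : ∀ᶠ n in atTop, a n ≤ b n)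
    (hb : ∀ n, 1 ≤ b n) : ∃ K, 0 ≤ K ∧ ∀ n, a n ≤ K * b n := by
  obtain ⟨N, hN⟩ := eventually_atTop.1 h
  have hK : 1 ≤ 1 + ∑ m ∈ range N, |a m| :=
    le_add_of_nonneg_right (sum_nonneg fun m _ => abs_nonneg _)
  refine ⟨_, zero_le_one.trans hK, fun n => ?_⟩
  rcases lt_or_ge n N with hn | hn
  · calc a n ≤ ∑ m ∈ range N, |a m| :=
          (le_abs_self _).trans (single_le_sum (fun m _ => abs_nonneg (a m)) (mem_range.2 hn))
      _ ≤ 1 + ∑ m ∈ range N, |a m| := le_add_of_nonneg_left zero_le_one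
      _ ≤ _ := le_mul_of_one_le_right (zero_le_one.trans hK) (hb n)
  · exact (hN n hn).trans (le_mul_of_one_le_left (zero_le_one.trans (hb n)) hK)

lemma eventually_const_mul_exp_le (K : ℝ) {c d : ℝ} (hcd : c < d) :
    ∀ᶠ n : ℕ in atTop, K * exp (c * n) ≤ exp (d * n) := by
  have hgrow : Tendsto (fun n : ℕ => exp ((d - c) * n)) atTop atTop :=
    tendsto_exp_atTop.comp (tendsto_natCast_atTop_atTop.const_mul_atTop (sub_pos.2 hcd))
  filter_upwards [hgrow.eventually_ge_atTop K] with n hn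
  calc K * exp (c * n) ≤ exp ((d - c) * n) * exp (c * n) := by gcongr
    _ = exp (d * n) := by rw [← exp_add]; ring_nf

lemma eventually_const_mul_natCast_mul_exp_le (K : ℝ) {c d : ℝ} (hcd : c < d) :
    ∀ᶠ n : ℕ in atTop, K * n * exp (c * n) ≤ exp (d * n) := by
  set δ := (d - c) / 2
  have hδ : 0 < δ := by simp only [δ]; linarith
  have hcδ : c + δ < d := by simp only [δ]; linarith
  filter_upwards [eventually_const_mul_exp_le (max K 0 / δ) hcδ] with n hn
  -- `δ n + 1 ≤ exp (δ n)` absorbs the linear factor into the exponential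
  have hlin : (n : ℝ) ≤ exp (δ * n) / δ := by
    rw [le_div_iff₀ hδ]; linarith [add_one_le_exp (δ * n)]
  calc K * n * exp (c * n) ≤ max K 0 * (exp (δ * n) / δ) * exp (c * n) := by
        gcongr; exact le_max_left _ _
    _ = max K 0 / δ * exp ((c + δ) * n) := by rw [add_mul, exp_add]; ring
    _ ≤ exp (d * n) := hn

namespace HasExpGrowthAtMost

variable {a b : ℕ → ℝ} {A C : ℝ}

lemma mono (h : HasExpGrowthAtMost b C) (hab : ∀ᶠ n in atTop, a n ≤ b n) :
    HasExpGrowthAtMost a C :=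
  fun c hc => (hab.and (h c hc)).mono fun _ hn => hn.1.trans hn.2

lemma add (ha : HasExpGrowthAtMost a A) (hb : HasExpGrowthAtMost b C) :
    HasExpGrowthAtMost (fun n => a n + b n) (max A C) := by
  intro c hc
  set c' := (max A C + c) / 2
  filter_upwards [ha c' (by simp only [c']; linarith [le_max_left A C]),
    hb c' (by simp only [c']; linarith [le_max_right A C]),
    eventually_const_mul_exp_le 2 (show c' < c by simp only [c']; linarith)] with n han hbn h2
  linarith

lemma sum_properDivisors (h : HasExpGrowthAtMost a C) (hC : 0 ≤ C) :
    HasExpGrowthAtMost (fun n => ∑ d ∈ n.properDivisors, a d) (C / 2) := by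
  intro c hc
  set c' := (C / 2 + c) / 2
  have hc' : 0 < c' := by simp only [c']; linarith
  obtain ⟨K, hK, haK⟩ := exists_forall_le_mul_of_eventually_le
    (h (2 * c') (by simp only [c']; linarith)) fun n => one_le_exp (by positivity)
  have hc'c : c' < c := by simp only [c']; linarith
  filter_upwards [eventually_const_mul_natCast_mul_exp_le K hc'c] with n hn
  -- a proper divisor `d` of `n` satisfies `2 d ≤ n`, which halves the rate
  have hdiv : ∀ d ∈ n.properDivisors, a d ≤ K * exp (c' * n) := by
    intro d hd
    obtain ⟨⟨k, rfl⟩, hlt⟩ := Nat.mem_properDivisors.1 hd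
    have hk : 2 ≤ k := by
      rcases k with _ | _ | k <;> simp_all
    have h2d : (2 * d : ℝ) ≤ (d * k : ℕ) := by exact_mod_cast (by nlinarith : 2 * d ≤ d * k)
    calc a d ≤ K * exp (2 * c' * d) := haK d
      _ ≤ K * exp (c' * (d * k : ℕ)) := by
          gcongr K * exp ?_
          linarith [mul_le_mul_of_nonneg_left h2d hc'.le]
  calc ∑ d ∈ n.properDivisors, a d ≤ ∑ _d ∈ n.properDivisors, K * exp (c' * n) :=
        sum_le_sum hdiv
    _ = #n.properDivisors * (K * exp (c' * n)) := by rw [sum_const, nsmul_eq_mul]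
    _ ≤ n * (K * exp (c' * n)) := by
        gcongr
        exact (card_filter_le _ _).trans (by simp)
    _ ≤ exp (c * n) := by linarith

end HasExpGrowthAtMost

namespace HasExpGrowthAtLeast

variable {a b : ℕ → ℝ} {A C : ℝ}

lemma mono (h : HasExpGrowthAtLeast a C) (hab : ∀ᶠ n in atTop, a n ≤ b n) :
    HasExpGrowthAtLeast b C :=
  fun c hc => (h c hc).and hab |>.mono fun _ hn => hn.1.trans hn.2

lemma sub (hb : HasExpGrowthAtLeast b C) (ha : HasExpGrowthAtMost a A) (hAC : A < C) :
    HasExpGrowthAtLeast (fun n => b n - a n) C := by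
  intro c hc
  set m := max c A
  have hm : m < C := max_lt hc hAC
  set c₁ := (m + C) / 2
  set c₂ := (m + c₁) / 2
  filter_upwards [hb c₁ (by simp only [c₁]; linarith),
    ha c₂ (by simp only [c₂, c₁]; linarith [le_max_right c A]),
    eventually_const_mul_exp_le 2 (show c₂ < c₁ by simp only [c₂, c₁]; linarith)]
    with n hbn han h2
  have : exp (c * n) ≤ exp (c₂ * n) := by
    gcongr; simp only [c₂, c₁]; linarith [le_max_left c A]
  linarith

end HasExpGrowthAtLeast

section LogRate

variable {a : ℕ → ℝ} {C : ℝ}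

lemma hasExpGrowthAtMost_iff_eventually_log_div_lt (ha : ∀ n, 0 ≤ a n) (hC : 0 ≤ C) :
    HasExpGrowthAtMost a C ↔ ∀ c > C, ∀ᶠ n : ℕ in atTop, log (a n) / n < c := by
  constructor
  · intro h c hc
    filter_upwards [h ((C + c) / 2) (by linarith), eventually_gt_atTop 0] with n han hn
    have hn' : (0 : ℝ) < n := by exact_mod_cast hn
    rw [div_lt_iff₀ hn']
    rcases (ha n).eq_or_lt with h0 | hpos
    · rw [← h0, log_zero]; exact mul_pos (by linarith) hn'
    · calc log (a n) ≤ (C + c) / 2 * n := (log_le_iff_le_exp hpos).2 han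
        _ < c * n := by gcongr; linarith
  · intro h c hc
    filter_upwards [h c hc, eventually_gt_atTop 0] with n hlog hn
    rcases (ha n).eq_or_lt with h0 | hpos
    · rw [← h0]; positivity
    · exact (log_le_iff_le_exp hpos).1 ((div_lt_iff₀ (by exact_mod_cast hn)).1 hlog).le

lemma hasExpGrowthAtLeast_iff_eventually_lt_log_div (ha : ∀ n, 0 ≤ a n) (hC : 0 < C) :
    HasExpGrowthAtLeast a C ↔ ∀ c < C, ∀ᶠ n : ℕ in atTop, c < log (a n) / n := by
  constructor
  · intro h c hc
    filter_upwards [h ((c + C) / 2) (by linarith), eventually_gt_atTop 0] with n han hn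
    have hn' : (0 : ℝ) < n := by exact_mod_cast hn
    rw [lt_div_iff₀ hn']
    calc c * n < (c + C) / 2 * n := by gcongr; linarith
      _ ≤ log (a n) := (le_log_iff_exp_le ((exp_pos _).trans_le han)).2 han
  · intro h c hc
    -- `log (a n) > 0` rules out the junk value `log 0 = 0`
    filter_upwards [h (max c 0) (max_lt hc hC), eventually_gt_atTop 0] with n hlog hn
    have hn' : (0 : ℝ) < n := by exact_mod_cast hn
    have hlog' : max c 0 * n < log (a n) := (lt_div_iff₀ hn').1 hlog
    have hpos : 0 < a n := by
      refine (ha n).lt_of_ne fun h0 => ?_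
      rw [← h0, log_zero] at hlog'
      linarith [mul_nonneg (le_max_right c 0) hn'.le]
    calc exp (c * n) ≤ exp (max c 0 * n) := by gcongr; exact le_max_left c 0
      _ ≤ a n := (le_log_iff_exp_le hpos).1 hlog'.le

lemma tendsto_log_div_iff (ha : ∀ n, 0 ≤ a n) (hC : 0 < C) :
    Tendsto (fun n : ℕ => log (a n) / n) atTop (nhds C) ↔
      HasExpGrowthAtMost a C ∧ HasExpGrowthAtLeast a C := by
  rw [tendsto_order, hasExpGrowthAtMost_iff_eventually_log_div_lt ha hC.le,
    hasExpGrowthAtLeast_iff_eventually_lt_log_div ha hC, and_comm]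

end LogRate

theorem card_fixedPoints_iterate_eq_sum_divisors {X : Type*} (T : X → X) {n : ℕ} (hn : n ≠ 0)
    (hfin : {x : X | T^[n] x = x}.Finite) :
    Nat.card {x : X | T^[n] x = x} =
      ∑ d ∈ n.divisors, Nat.card {x : X | minimalPeriod T x = d} := by
  classical
  rw [Nat.card_coe_set_eq, Set.ncard_eq_toFinset_card _ hfin,
    card_eq_sum_card_fiberwise (f := minimalPeriod T) (t := n.divisors)]
  · refine sum_congr rfl fun d hd => ?_
    rw [Nat.card_coe_set_eq, ← Set.ncard_coe_finset]
    congr 1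
    ext x
    simp only [coe_filter, Set.Finite.mem_toFinset, Set.mem_ofPred_eq, and_iff_right_iff_imp]
    rintro rfl
    exact isPeriodicPt_iff_minimalPeriod_dvd.2 (Nat.dvd_of_mem_divisors hd)
  · intro x hx
    simp only [Set.Finite.coe_toFinset, Set.mem_ofPred_eq, mem_coe, Nat.mem_divisors] at hx ⊢
    exact ⟨isPeriodicPt_iff_minimalPeriod_dvd.1 hx, hn⟩

/-- For a map `T : X → X` with finitely many points of each period, and any real
`C` with `0 < C < ∞`: `(1/n) log Fₙ(T) → C` iff `(1/n) log Lₙ(T) → C`, where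
`Fₙ(T)` counts points of period `n` and `Lₙ(T)` counts points of least period `n`. -/
theorem fix_least_relation {X : Type*} (T : X → X)
    (hfin : ∀ n : ℕ, 1 ≤ n → Set.Finite {x : X | T^[n] x = x})
    (C : ℝ) (hC : 0 < C) :
    Filter.Tendsto
        (fun n : ℕ => Real.log (Nat.card {x : X | T^[n] x = x}) / n)
        Filter.atTop (nhds C) ↔
      Filter.Tendsto
        (fun n : ℕ => Real.log (Nat.card {x : X | Function.minimalPeriod T x = n}) / n)
        Filter.atTop (nhds C) := by
  set F : ℕ → ℝ := fun n => Nat.card {x : X | T^[n] x = x}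
  set L : ℕ → ℝ := fun n => Nat.card {x : X | minimalPeriod T x = n}
  set P : ℕ → ℝ := fun n => ∑ d ∈ n.properDivisors, L d
  have hFLP : ∀ᶠ n in atTop, F n = L n + P n := by
    filter_upwards [eventually_ge_atTop 1] with n hn
    simp only [F, L, P, card_fixedPoints_iterate_eq_sum_divisors T (by omega) (hfin n hn),
      ← Nat.cons_self_properDivisors (by omega : n ≠ 0), sum_cons]
    push_cast
    ring
  have hLF : ∀ᶠ n in atTop, L n ≤ F n :=
    hFLP.mono fun n h => h ▸ le_add_of_nonneg_right (sum_nonneg fun _ _ => Nat.cast_nonneg _)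
  rw [tendsto_log_div_iff (fun n => Nat.cast_nonneg _) hC,
    tendsto_log_div_iff (fun n => Nat.cast_nonneg _) hC]
  constructor
  · rintro ⟨hFmost, hFleast⟩
    have hLmost := hFmost.mono hLF
    refine ⟨hLmost, (hFleast.sub (hLmost.sum_properDivisors hC.le) (half_lt_self hC)).mono ?_⟩
    exact hFLP.mono fun n h => (sub_eq_of_eq_add h).le
  · rintro ⟨hLmost, hLleast⟩
    have hFmost := hLmost.add (hLmost.sum_properDivisors hC.le)
    rw [max_eq_left (half_le_self hC.le)] at hFmost
    exact ⟨hFmost.mono (hFLP.mono fun n h => h.le), hLleast.mono hLF⟩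
end

section
/- Let (p_i)_{i≥1} be a sequence of primes with i | p_i − 1 for all i ≥ 1, and for each i let a_i be a unit of ℤ/p_iℤ of multiplicative order exactly i. Let X = Π_{i≥1} ℤ/p_iℤ and let T : X → X be given by T((x_i)_i) = (a_i·x_i)_i. Then for every n ≥ 1 the set {x ∈ X : T^n(x) = x} is finite and its cardinality equals Π_{d | n} p_d, the product over the positive divisors d of n; in particular it is at least p_n. -/
/-!
`T` is multiplication by `c = (aᵢ)ᵢ`, so `Tⁿ` is multiplication by `cⁿ`. In a domain, `u * x = x`
forces `u = 1` or `x = 0`, and `aᵢⁿ = 1` exactly when `i = orderOf aᵢ` divides `n`. Hence a fixed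
point of `Tⁿ` is an arbitrary element of `Π_{d ∣ n} ℤ/p_dℤ`, extended by zero.
-/

open Finset

section FixedPoints

variable {ι : Type*} {K : ι → Type*} [∀ i, MonoidWithZero (K i)] [∀ i, IsRightCancelMulZero (K i)]

lemma Pi.mul_eq_self_iff (c x : ∀ i, K i) : c * x = x ↔ ∀ i, c i ≠ 1 → x i = 0 := by
  refine funext_iff.trans (forall_congr' fun i => ?_)
  by_cases hx : x i = 0
  · simp [hx]
  · simp [Pi.mul_apply, mul_eq_right₀ hx, hx]

open Classical in
noncomputable def Pi.mulLeftFixedPointsEquiv (c : ∀ i, K i) (s : Set ι) (hs : ∀ i, c i = 1 ↔ i ∈ s) :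
    {x : ∀ i, K i | c * x = x} ≃ ∀ i : s, K i where
  toFun x i := x.1 i
  invFun y := ⟨fun i => if h : i ∈ s then y ⟨i, h⟩ else 0,
    (Pi.mul_eq_self_iff c _).2 fun i hi => dif_neg (mt (hs i).2 hi)⟩
  left_inv x := by
    ext i
    by_cases h : i ∈ s
    · exact dif_pos h
    · exact (dif_neg h).trans ((Pi.mul_eq_self_iff c x).1 x.2 i (mt (hs i).1 h)).symm
  right_inv y := funext fun i => dif_pos i.2

lemma Pi.natCard_mulLeft_fixedPoints (c : ∀ i, K i) (s : Finset ι) (hs : ∀ i, c i = 1 ↔ i ∈ s) :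
    Nat.card {x : ∀ i, K i | c * x = x} = ∏ i ∈ s, Nat.card (K i) := by
  rw [Nat.card_congr (Pi.mulLeftFixedPointsEquiv c s hs), Nat.card_pi]
  exact prod_coe_sort s fun i => Nat.card (K i)

end FixedPoints

lemma Units.val_pow_eq_one_iff_orderOf_dvd {M : Type*} [Monoid M] (u : Mˣ) (n : ℕ) :
    (u : M) ^ n = 1 ↔ orderOf u ∣ n := by
  rw [← orderOf_units, orderOf_dvd_iff_pow_eq_one]

theorem product_fixed_points_general (p : ℕ → ℕ) (a : ∀ i, (ZMod (p i))ˣ)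
    (hp : ∀ i, 1 ≤ i → (p i).Prime)
    (ha : ∀ i, 1 ≤ i → orderOf (a i) = i)
    (T : (∀ i : {i : ℕ // 1 ≤ i}, ZMod (p i.val)) →
         (∀ i : {i : ℕ // 1 ≤ i}, ZMod (p i.val)))
    (hT : ∀ x i, T x i = (a i.val : ZMod (p i.val)) * x i) :
    ∀ n : ℕ, 1 ≤ n →
      Set.Finite {x | T^[n] x = x} ∧
      Nat.card {x | T^[n] x = x} = ∏ d ∈ n.divisors, p d ∧
      p n ≤ Nat.card {x | T^[n] x = x} := by
  intro n hn
  have : ∀ i : {i : ℕ // 1 ≤ i}, Fact (p i).Prime := fun i => ⟨hp i i.2⟩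
  set c : ∀ i : {i : ℕ // 1 ≤ i}, ZMod (p i.val) := fun i => a i.val
  have hTn : T^[n] = (c ^ n * ·) := by
    rw [← mul_left_iterate]
    exact congrArg (·^[n]) (funext fun x => funext (hT x))
  have hcn (i : {i : ℕ // 1 ≤ i}) : (c ^ n) i = 1 ↔ i ∈ n.divisors.subtype (1 ≤ ·) := by
    rw [Pi.pow_apply, Units.val_pow_eq_one_iff_orderOf_dvd, ha i i.2, mem_subtype,
      Nat.mem_divisors, and_iff_left (by omega)]
  have hcard : Nat.card {x | T^[n] x = x} = ∏ d ∈ n.divisors, p d := by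
    rw [hTn, Pi.natCard_mulLeft_fixedPoints _ _ hcn,
      prod_subtype_eq_prod_filter (fun d => Nat.card (ZMod (p d))),
      filter_true_of_mem (p := (1 ≤ ·)) fun d hd => Nat.pos_of_mem_divisors hd]
    exact prod_congr rfl fun d _ => Nat.card_zmod (p d)
  have hp_one_le (d : ℕ) (hd : d ∈ n.divisors) : 1 ≤ p d :=
    (hp d (Nat.pos_of_mem_divisors hd)).one_lt.le
  have hp_le : p n ≤ ∏ d ∈ n.divisors, p d :=
    single_le_prod' hp_one_le (Nat.mem_divisors_self n (by omega))
  refine ⟨Set.finite_coe_iff.1 (Nat.finite_of_card_ne_zero ?_), hcard, hcard ▸ hp_le⟩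
  rw [hcard]
  exact (prod_pos fun d hd => hp_one_le d hd).ne'

/-- Let `(pᵢ)` be primes with `i ∣ pᵢ − 1`, and `aᵢ` a unit of `ℤ/pᵢℤ` of order
exactly `i`. Let `X = Π_{i ≥ 1} ℤ/pᵢℤ` with `T` acting coordinatewise by
multiplication by `aᵢ`. Then for every `n ≥ 1` the set `{x | Tⁿ x = x}` is finite,
its cardinality is `Π_{d ∣ n} p_d`, and in particular it is at least `pₙ`. -/
theorem product_fixed_points (p : ℕ → ℕ) (a : ∀ i, (ZMod (p i))ˣ)
    (hp : ∀ i, 1 ≤ i → (p i).Prime)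
    (hd : ∀ i, 1 ≤ i → i ∣ p i - 1)
    (ha : ∀ i, 1 ≤ i → orderOf (a i) = i)
    (T : (∀ i : {i : ℕ // 1 ≤ i}, ZMod (p i.val)) →
         (∀ i : {i : ℕ // 1 ≤ i}, ZMod (p i.val)))
    (hT : ∀ x i, T x i = (a i.val : ZMod (p i.val)) * x i) :
    ∀ n : ℕ, 1 ≤ n →
      Set.Finite {x | T^[n] x = x} ∧
      Nat.card {x | T^[n] x = x} = ∏ d ∈ n.divisors, p d ∧
      p n ≤ Nat.card {x | T^[n] x = x} :=
  product_fixed_points_general p a hp ha T hT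
end

section
/- Let X be a set, T : X → X a map such that for every n ≥ 1 the set {x ∈ X : T^n(x) = x} is finite, and C > 0 a real number. If (1/n)·log F_n(T) → C as n → ∞, then (1/n)·log L_n(T) → C as n → ∞. -/
/-!
A point of period `n` has least period `n` or lies in `ptsOfPeriod T d` for a proper
divisor `d ≤ n / 2` of `n`, so `Lₙ ≤ Fₙ ≤ Lₙ + ∑_{1 ≤ d ≤ n/2} F_d`. Since
`Fₙ = exp ((C + o(1)) n)` with `C > 0`, the sum is `O(n e^{5Cn/8}) = o(e^{3Cn/4}) = o(Fₙ)`; hence eventually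
`Fₙ / 2 ≤ Lₙ ≤ Fₙ`, which does not change the exponential growth rate.
-/

open Filter Function Real Finset Asymptotics Topology

namespace Function

variable {α : Type*} (T : α → α)

theorem setOf_minimalPeriod_eq_subset_ptsOfPeriod (n : ℕ) :
    {x | minimalPeriod T x = n} ⊆ ptsOfPeriod T n :=
  fun x hx => hx ▸ isPeriodicPt_minimalPeriod T x

theorem ptsOfPeriod_eq_setOf_minimalPeriod_eq_union {n : ℕ} (hn : 0 < n) :
    ptsOfPeriod T n =
      {x | minimalPeriod T x = n} ∪ ⋃ d ∈ n.properDivisors, ptsOfPeriod T d := by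
  ext x
  simp only [Set.mem_union, Set.mem_iUnion₂, mem_ptsOfPeriod, exists_prop]
  constructor
  · intro hx
    by_cases hmin : minimalPeriod T x = n
    · exact Or.inl hmin
    · have hdvd := hx.minimalPeriod_dvd
      exact Or.inr ⟨_, Nat.mem_properDivisors.mpr
        ⟨hdvd, (Nat.le_of_dvd hn hdvd).lt_of_ne hmin⟩, isPeriodicPt_minimalPeriod T x⟩
  · rintro (hmin | ⟨d, hd, hx⟩)
    · exact hmin ▸ isPeriodicPt_minimalPeriod T x
    · exact hx.trans_dvd (Nat.mem_properDivisors.mp hd).1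

theorem card_ptsOfPeriod_le {n : ℕ} (hn : 0 < n) :
    Nat.card (ptsOfPeriod T n) ≤ Nat.card {x | minimalPeriod T x = n} +
      ∑ d ∈ n.properDivisors, Nat.card (ptsOfPeriod T d) := by
  simp only [Nat.card_coe_set_eq]
  rw [ptsOfPeriod_eq_setOf_minimalPeriod_eq_union T hn]
  exact (Set.ncard_union_le _ _).trans (Nat.add_le_add_left (Finset.set_ncard_biUnion_le _ _) _)

end Function

theorem Nat.properDivisors_subset_Icc_half (n : ℕ) : n.properDivisors ⊆ Icc 1 (n / 2) := by
  intro d hd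
  have hdvd := (Nat.mem_properDivisors.mp hd).1
  have htwo : 2 ≤ n / d := Nat.one_lt_div_of_mem_properDivisors hd
  refine Finset.mem_Icc.mpr
    ⟨Nat.pos_of_mem_properDivisors hd, (Nat.le_div_iff_mul_le two_pos).mpr ?_⟩
  calc d * 2 ≤ d * (n / d) := Nat.mul_le_mul_left d htwo
    _ = n := Nat.mul_div_cancel' hdvd

section GrowthRate

variable {u : ℕ → ℝ} {C : ℝ}

theorem eventually_le_exp_mul_of_tendsto_log_div
    (h : Tendsto (fun n => log (u n) / n) atTop (𝓝 C)) {c : ℝ} (hc : C < c) :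
    ∀ᶠ n : ℕ in atTop, u n ≤ exp (c * n) := by
  filter_upwards [h.eventually (gt_mem_nhds hc), eventually_gt_atTop 0] with n hn hn0
  have hlog : log (u n) < c * n := (div_lt_iff₀ (by exact_mod_cast hn0)).mp hn
  exact (le_exp_log _).trans (exp_le_exp.mpr hlog.le)

theorem eventually_exp_mul_le_of_tendsto_log_div (hu : ∀ n, 0 ≤ u n)
    (h : Tendsto (fun n => log (u n) / n) atTop (𝓝 C)) {c : ℝ} (hc₀ : 0 ≤ c) (hc : c < C) :
    ∀ᶠ n : ℕ in atTop, exp (c * n) ≤ u n := by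
  filter_upwards [h.eventually (lt_mem_nhds hc), eventually_gt_atTop 0] with n hn hn0
  have hlog : c * n < log (u n) := (lt_div_iff₀ (by exact_mod_cast hn0)).mp hn
  have hpos : 0 < u n := by
    refine (hu n).lt_of_ne fun hzero => ?_
    rw [← hzero, log_zero] at hlog
    exact hlog.not_ge (by positivity)
  exact ((lt_log_iff_exp_lt hpos).mp hlog).le

theorem isLittleO_sum_Icc_half_of_tendsto_log_div (hu : ∀ n, 0 ≤ u n)
    (h : Tendsto (fun n => log (u n) / n) atTop (𝓝 C)) (hC : 0 < C) :
    (fun n => ∑ d ∈ Icc 1 (n / 2), u d) =o[atTop] u := by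
  have hbig : u =O[atTop] fun n : ℕ => exp (5 * C / 4 * n) := by
    refine IsBigO.of_bound' ?_
    filter_upwards [eventually_le_exp_mul_of_tendsto_log_div h (by linarith : C < 5 * C / 4)]
      with n hn
    rwa [norm_of_nonneg (hu n), norm_of_nonneg (exp_pos _).le]
  obtain ⟨K, hK₀, hK⟩ := bound_of_isBigO_nat_atTop hbig
  have hsum : ∀ n : ℕ, ∑ d ∈ Icc 1 (n / 2), u d ≤ K * (n * exp (5 * C / 8 * n)) := by
    intro n
    have hterm : ∀ d ∈ Icc 1 (n / 2), u d ≤ K * exp (5 * C / 8 * n) := by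
      intro d hd
      have hdn : (d : ℝ) ≤ n / 2 :=
        (Nat.cast_le.mpr (Finset.mem_Icc.mp hd).2).trans Nat.cast_div_le
      calc u d ≤ K * exp (5 * C / 4 * d) := by
            simpa [norm_of_nonneg (hu d)] using hK (exp_ne_zero (5 * C / 4 * d))
        _ ≤ K * exp (5 * C / 8 * n) := by gcongr K * exp ?_; nlinarith
    calc ∑ d ∈ Icc 1 (n / 2), u d ≤ (n / 2 : ℕ) * (K * exp (5 * C / 8 * n)) := by
          simpa using Finset.sum_le_sum hterm
      _ ≤ K * (n * exp (5 * C / 8 * n)) := by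
          rw [mul_left_comm]
          gcongr
          exact_mod_cast Nat.div_le_self n 2
  have hupper : (fun n => ∑ d ∈ Icc 1 (n / 2), u d) =O[atTop]
      fun n : ℕ => (n : ℝ) * exp (5 * C / 8 * n) := by
    refine IsBigO.of_bound K (Eventually.of_forall fun n => ?_)
    rw [norm_of_nonneg (Finset.sum_nonneg fun d _ => hu d), norm_of_nonneg (by positivity)]
    exact hsum n
  have hgap : (fun n : ℕ => (n : ℝ) * exp (5 * C / 8 * n)) =o[atTop]
      fun n : ℕ => exp (3 * C / 4 * n) := by
    have hpoly : (fun n : ℕ => (n : ℝ)) =o[atTop] fun n : ℕ => exp (C / 8 * n) := by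
      simpa [Function.comp_def] using
        (isLittleO_pow_exp_pos_mul_atTop 1 (by positivity : 0 < C / 8)).comp_tendsto
          tendsto_natCast_atTop_atTop
    refine (hpoly.mul_isBigO (isBigO_refl (fun n : ℕ => exp (5 * C / 8 * n)) atTop)).congr_right
      fun n => ?_
    rw [← exp_add]
    ring_nf
  have hlower : (fun n : ℕ => exp (3 * C / 4 * n)) =O[atTop] u := by
    refine IsBigO.of_bound' ?_
    filter_upwards [eventually_exp_mul_le_of_tendsto_log_div hu h (by positivity)
      (by linarith : 3 * C / 4 < C)] with n hn
    rwa [norm_of_nonneg (exp_pos _).le, norm_of_nonneg (hu n)]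
  exact (hupper.trans_isLittleO hgap).trans_isBigO hlower

theorem tendsto_log_div_of_squeeze {v : ℕ → ℝ} {c : ℝ} (hc : 0 < c)
    (hu : ∀ᶠ n in atTop, 0 < u n) (hlow : ∀ᶠ n in atTop, c * u n ≤ v n)
    (hup : ∀ᶠ n in atTop, v n ≤ u n)
    (h : Tendsto (fun n => log (u n) / n) atTop (𝓝 C)) :
    Tendsto (fun n => log (v n) / n) atTop (𝓝 C) := by
  have hshift : Tendsto (fun n : ℕ => log c / n + log (u n) / n) atTop (𝓝 C) := by
    simpa using (tendsto_const_div_atTop_nhds_zero_nat (log c)).add h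
  refine tendsto_of_tendsto_of_tendsto_of_le_of_le' hshift h ?_ ?_
  · filter_upwards [hu, hlow] with n hun hlo
    rw [← add_div, ← log_mul hc.ne' hun.ne']
    exact div_le_div_of_nonneg_right (log_le_log (by positivity) hlo) n.cast_nonneg
  · filter_upwards [hu, hlow, hup] with n hun hlo hvu
    exact div_le_div_of_nonneg_right (log_le_log ((mul_pos hc hun).trans_le hlo) hvu)
      n.cast_nonneg

theorem tendsto_log_div_of_le_add_sum_Icc_half {v : ℕ → ℝ} (hC : 0 < C) (hu : ∀ n, 0 ≤ u n)
    (hvu : ∀ᶠ n in atTop, v n ≤ u n)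
    (huv : ∀ᶠ n in atTop, u n ≤ v n + ∑ d ∈ Icc 1 (n / 2), u d)
    (h : Tendsto (fun n => log (u n) / n) atTop (𝓝 C)) :
    Tendsto (fun n => log (v n) / n) atTop (𝓝 C) := by
  have hpos : ∀ᶠ n in atTop, 0 < u n := by
    filter_upwards [eventually_exp_mul_le_of_tendsto_log_div hu h le_rfl hC] with n hn
    exact (exp_pos _).trans_le hn
  have hsmall := (isLittleO_sum_Icc_half_of_tendsto_log_div hu h hC).bound one_half_pos
  refine tendsto_log_div_of_squeeze one_half_pos hpos ?_ hvu h
  filter_upwards [huv, hsmall] with n huv hsmall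
  rw [norm_of_nonneg (Finset.sum_nonneg fun d _ => hu d), norm_of_nonneg (hu n)] at hsmall
  linarith

end GrowthRate

/-- If `(1/n) log Fₙ(T) → C > 0` then `(1/n) log Lₙ(T) → C`, for any map `T` with
finitely many points of each period. -/
theorem least_of_fix {X : Type*} (T : X → X)
    (hfin : ∀ n : ℕ, 1 ≤ n → Set.Finite {x : X | T^[n] x = x})
    (C : ℝ) (hC : 0 < C)
    (h : Filter.Tendsto
        (fun n : ℕ => Real.log (Nat.card {x : X | T^[n] x = x}) / n)
        Filter.atTop (nhds C)) :
    Filter.Tendsto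
        (fun n : ℕ => Real.log (Nat.card {x : X | Function.minimalPeriod T x = n}) / n)
        Filter.atTop (nhds C) := by
  refine tendsto_log_div_of_le_add_sum_Icc_half (u := fun n => (Nat.card (ptsOfPeriod T n) : ℝ))
    hC (fun n => Nat.cast_nonneg _) ?_ ?_ h
  · filter_upwards [eventually_ge_atTop 1] with n hn
    exact_mod_cast Nat.card_mono (hfin n hn) (setOf_minimalPeriod_eq_subset_ptsOfPeriod T n)
  · filter_upwards [eventually_ge_atTop 1] with n hn
    have hsum := Finset.sum_le_sum_of_subset (f := fun d => Nat.card (ptsOfPeriod T d))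
      (Nat.properDivisors_subset_Icc_half n)
    exact_mod_cast (card_ptsOfPeriod_le T hn).trans (Nat.add_le_add_left hsum _)
end
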